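/- arXiv:1407.8078 — 2 statements merged into one kernel-verified Lean document; each statement's English description precedes it below -/
import Mathlib

section
/- Suppose |r(λ_n)| > 0, the n×n matrix X_n* B Y_0 is invertible, and additionally |r(λ_j)| > |r(λ_{n+1})| for some fixed j with 1 ≤ j ≤ n. Then the B-norm distance of the eigenvector x_j to the column span of Z_k tends to 0 as k → ∞, i.e. min over z in span(Z_k) of ‖x_j − z‖_B → 0. -/
open Matrix ComplexOrder

/-!
Write `Y₀ = X C` with `C = Xᴴ B Y₀`. The top `n × n` block of `C` is `Xₙᴴ B Y₀`, which is
invertible, so some `g` in the column span of `C` agrees with `e_j` on the first `n` coordinates.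
Since the `W_k` are invertible, `span Z_k = span (r(M)ᵏ Y₀)`, which contains `X Dᵏ g / r(λ_j)ᵏ`
with `D = diag (r(λ_i))`. Its difference from `x_j = X e_j` is `X Dᵏ (e_j - g) / r(λ_j)ᵏ`, and
`e_j - g` is supported on the last `N - n` coordinates, where `|r(λ_i)| ≤ |r(λ_{n+1})|`. As `X`
is an isometry from the Euclidean norm to the `B`-norm, the distance is at most
`(|r(λ_{n+1})| / |r(λ_j)|)ᵏ ‖e_j - g‖ → 0`.
-/

namespace Matrix

variable {ι m n R 𝕜 : Type*} [Fintype n] [DecidableEq n]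

theorem range_mulVecLin_mul_of_isUnit [CommRing R] {A : Matrix m n R} {P : Matrix n n R}
    (hP : IsUnit P) : LinearMap.range (A * P).mulVecLin = LinearMap.range A.mulVecLin := by
  rw [mulVecLin_mul, LinearMap.range_comp_of_range_eq_top]
  exact LinearMap.range_eq_top.mpr (mulVec_surjective_iff_isUnit.mpr hP)

theorem range_mulVecLin_succ_eq_range_pow_mul [Fintype m] [DecidableEq m] [CommRing R]
    {T : Matrix m m R} {Y Z : ℕ → Matrix m n R} {W : ℕ → Matrix n n R} (hZ : ∀ k, Z (k + 1) = T * Y k)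
    (hY : ∀ k, Y (k + 1) = Z (k + 1) * W (k + 1)) (hW : ∀ k, IsUnit (W (k + 1))) (k : ℕ) :
    LinearMap.range (Z (k + 1)).mulVecLin = LinearMap.range (T ^ (k + 1) * Y 0).mulVecLin := by
  induction k with
  | zero => rw [hZ, pow_one]
  | succ k ih =>
    rw [hZ, hY, ← Matrix.mul_assoc, range_mulVecLin_mul_of_isUnit (hW k), mulVecLin_mul,
      LinearMap.range_comp, ih, ← LinearMap.range_comp, ← mulVecLin_mul, ← Matrix.mul_assoc,
      ← pow_succ']

theorem exists_mulVec_comp_eq_of_isUnit_submatrix [CommRing R] {C : Matrix m n R} {e : n → m}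
    (hC : IsUnit (C.submatrix e id)) (t : n → R) : ∃ w, (C *ᵥ w) ∘ e = t :=
  mulVec_surjective_iff_isUnit.mpr hC t

section RCLike

variable [RCLike 𝕜] [Fintype ι]

theorem sqrt_re_star_dotProduct_self (v : ι → 𝕜) :
    √(RCLike.re (star v ⬝ᵥ v)) = ‖WithLp.toLp 2 v‖ := by
  rw [dotProduct_comm, ← EuclideanSpace.inner_toLp_toLp, inner_self_eq_norm_sq,
    Real.sqrt_sq (norm_nonneg _)]

theorem sqrt_re_star_mulVec_dotProduct_mulVec [DecidableEq ι] {X B : Matrix ι ι 𝕜}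
    (hX : Xᴴ * B * X = 1) (v : ι → 𝕜) :
    √(RCLike.re (star (X *ᵥ v) ⬝ᵥ B *ᵥ (X *ᵥ v))) = ‖WithLp.toLp 2 v‖ := by
  rw [star_mulVec, ← dotProduct_mulVec, mulVec_mulVec, mulVec_mulVec, hX, one_mulVec,
    sqrt_re_star_dotProduct_self]

theorem norm_diagonal_mulVec_le [DecidableEq ι] {d u : ι → 𝕜} {c : ℝ} (hc : 0 ≤ c)
    (hd : ∀ i, u i ≠ 0 → ‖d i‖ ≤ c) :
    ‖WithLp.toLp 2 (diagonal d *ᵥ u)‖ ≤ c * ‖WithLp.toLp 2 u‖ := by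
  rw [EuclideanSpace.norm_eq, EuclideanSpace.norm_eq, ← Real.sqrt_sq hc,
    ← Real.sqrt_mul (sq_nonneg c), Finset.mul_sum]
  refine Real.sqrt_le_sqrt (Finset.sum_le_sum fun i _ => ?_)
  rw [WithLp.ofLp_toLp, WithLp.ofLp_toLp, mulVec_diagonal, norm_mul, mul_pow]
  by_cases hu : u i = 0
  · simp [hu]
  · gcongr
    exact hd i hu

theorem exists_forall_norm_single_sub_diagonal_pow_mul_mulVec_le {p q : ℕ} (h : q ≤ p)
    {C : Matrix (Fin p) (Fin q) 𝕜} (hC : IsUnit (C.submatrix (Fin.castLE h) id))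
    {d : Fin p → 𝕜} {c : ℝ} (hc : 0 ≤ c) (hd : ∀ i : Fin p, q ≤ i → ‖d i‖ ≤ c)
    {j : Fin p} (hdj : d j ≠ 0) :
    ∃ K, ∀ k, ∃ w, ‖WithLp.toLp 2 (Pi.single j 1 - (diagonal d ^ k * C) *ᵥ w)‖ ≤
      (c / ‖d j‖) ^ k * K := by
  obtain ⟨w, hw⟩ := exists_mulVec_comp_eq_of_isUnit_submatrix hC (Pi.single j 1 ∘ Fin.castLE h)
  set u := Pi.single j 1 - C *ᵥ w
  have hu : ∀ i, u i ≠ 0 → q ≤ i := by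
    intro i hi
    by_contra! hlt
    exact hi (sub_eq_zero.mpr (congrFun hw ⟨i, hlt⟩).symm)
  refine ⟨‖WithLp.toLp 2 u‖, fun k => ⟨(d j ^ k)⁻¹ • w, ?_⟩⟩
  have hdiag : Pi.single j 1 - (diagonal d ^ k * C) *ᵥ ((d j ^ k)⁻¹ • w) =
      (d j ^ k)⁻¹ • (diagonal (d ^ k) *ᵥ u) := by
    rw [diagonal_pow, ← mulVec_mulVec, mulVec_smul, mulVec_smul, mulVec_sub, smul_sub,
      diagonal_mulVec_single, ← Pi.single_smul', Pi.pow_apply, smul_eq_mul, mul_one,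
      inv_mul_cancel₀ (pow_ne_zero k hdj)]
  calc ‖WithLp.toLp 2 (Pi.single j 1 - (diagonal d ^ k * C) *ᵥ ((d j ^ k)⁻¹ • w))‖
      = (‖d j‖ ^ k)⁻¹ * ‖WithLp.toLp 2 (diagonal (d ^ k) *ᵥ u)‖ := by
        rw [hdiag, WithLp.toLp_smul, norm_smul, norm_inv, norm_pow]
    _ ≤ (‖d j‖ ^ k)⁻¹ * (c ^ k * ‖WithLp.toLp 2 u‖) := by
        gcongr
        refine norm_diagonal_mulVec_le (pow_nonneg hc k) fun i hi => ?_
        rw [Pi.pow_apply, norm_pow]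
        exact pow_le_pow_left₀ (norm_nonneg _) (hd i (hu i hi)) k
    _ = (c / ‖d j‖) ^ k * ‖WithLp.toLp 2 u‖ := by
        rw [div_pow]
        ring

end RCLike

end Matrix

theorem tendsto_sInf_nhds_zero_of_exists_le_pow {E : Type*} {f : E → ℝ} (hf : ∀ z, 0 ≤ f z)
    {V : ℕ → Set E} {ρ K : ℝ} (hρ0 : 0 ≤ ρ) (hρ1 : ρ < 1)
    (h : ∀ k, ∃ z ∈ V (k + 1), f z ≤ ρ ^ (k + 1) * K) :
    Filter.Tendsto (fun k => sInf {t | ∃ z ∈ V k, t = f z}) Filter.atTop (nhds 0) := by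
  have hnonneg (k : ℕ) : 0 ≤ sInf {t | ∃ z ∈ V k, t = f z} :=
    Real.sInf_nonneg fun _ ⟨z, _, ht⟩ => ht ▸ hf z
  have hle (k : ℕ) : sInf {t | ∃ z ∈ V (k + 1), t = f z} ≤ ρ ^ (k + 1) * K := by
    obtain ⟨z, hz, hfz⟩ := h k
    exact csInf_le_of_le ⟨0, fun _ ⟨z, _, ht⟩ => ht ▸ hf z⟩ ⟨z, hz, rfl⟩ hfz
  have hlim := (tendsto_pow_atTop_nhds_zero_of_lt_one hρ0 hρ1).mul_const K
  rw [zero_mul] at hlim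
  exact (Filter.tendsto_add_atTop_iff_nat 1).mp
    (squeeze_zero (fun k => hnonneg (k + 1)) hle ((Filter.tendsto_add_atTop_iff_nat 1).mpr hlim))

/-- **FEAST convergence** (Güttel–Polizzi–Tang–Viaud, Theorem 2.2, final statement).
If `|r(λ_n)| > 0`, `X_nᴴ B Y_0` is invertible, and `|r(λ_j)| > |r(λ_{n+1})|` for a
fixed `j ≤ n`, then the `B`-norm distance of the eigenvector `x_j` to the column span
of `Z_k` tends to `0` as `k → ∞`. -/
theorem feast_subspace_iteration_convergence
    (N n : ℕ) (hnN : n < N)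
    (B X : Matrix (Fin N) (Fin N) ℂ)
    (lam : Fin N → ℝ)
    (hX : Xᴴ * B * X = 1)
    (r : ℝ → ℂ)
    (hord : ∀ i j : Fin N, i ≤ j → ‖r (lam j)‖ ≤ ‖r (lam i)‖)
    (rM : Matrix (Fin N) (Fin N) ℂ)
    (hrM : rM = X * Matrix.diagonal (fun i => r (lam i)) * X⁻¹)
    (Y Z : ℕ → Matrix (Fin N) (Fin n) ℂ)
    (W : ℕ → Matrix (Fin n) (Fin n) ℂ)
    (hZ : ∀ k, Z (k + 1) = rM * Y k)
    (hW : ∀ k, (W (k + 1))ᴴ * ((Z (k + 1))ᴴ * B * Z (k + 1)) * W (k + 1) = 1)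
    (hY : ∀ k, Y (k + 1) = Z (k + 1) * W (k + 1))
    (Xn : Matrix (Fin N) (Fin n) ℂ)
    (hXn : Xn = X.submatrix id (Fin.castLE hnN.le))
    (hY0 : IsUnit (Xnᴴ * B * Y 0))
    (Bnorm : (Fin N → ℂ) → ℝ)
    (hBnorm : ∀ w, Bnorm w = Real.sqrt ((star w ⬝ᵥ B.mulVec w).re))
    (j : Fin N)
    (hsep : ‖r (lam ⟨n, hnN⟩)‖ < ‖r (lam j)‖) :
    Filter.Tendsto
      (fun k : ℕ =>
        sInf {t : ℝ | ∃ z ∈ LinearMap.range (Z k).mulVecLin,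
          t = Bnorm ((fun i => X i j) - z)})
      Filter.atTop (nhds 0) := by
  set D := diagonal fun i => r (lam i)
  have hrM_pow (k : ℕ) : rM ^ k * X = X * D ^ k := by
    refine (SemiconjBy.pow_right ?_ k).symm
    rw [SemiconjBy, hrM, Matrix.mul_assoc (X * D), inv_eq_left_inv hX, hX, mul_one]
  set C := Xᴴ * B * Y 0
  have hY0C : Y 0 = X * C := by
    rw [← Matrix.mul_assoc, mul_eq_one_comm.mp hX, Matrix.one_mul]
  have hC : IsUnit (C.submatrix (Fin.castLE hnN.le) id) := by
    subst hXn
    exact hY0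
  have hrj : 0 < ‖r (lam j)‖ := (norm_nonneg _).trans_lt hsep
  obtain ⟨K, hK⟩ := exists_forall_norm_single_sub_diagonal_pow_mul_mulVec_le hnN.le hC
    (norm_nonneg _) (fun i hi => hord ⟨n, hnN⟩ i hi) (norm_pos_iff.mp hrj)
  refine tendsto_sInf_nhds_zero_of_exists_le_pow (K := K)
    (fun _ => hBnorm _ ▸ Real.sqrt_nonneg _) (by positivity) ((div_lt_one hrj).mpr hsep) fun k => ?_
  obtain ⟨w, hw⟩ := hK (k + 1)
  refine ⟨X *ᵥ ((D ^ (k + 1) * C) *ᵥ w), ?_, ?_⟩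
  · refine range_mulVecLin_succ_eq_range_pow_mul hZ hY
      (fun k => (isUnit_iff_isUnit_det _).mpr (isUnit_det_of_left_inverse (hW k))) k ▸ ⟨w, ?_⟩
    rw [mulVecLin_apply, mulVec_mulVec, hY0C, ← Matrix.mul_assoc, hrM_pow, Matrix.mul_assoc]
  · rw [hBnorm, show (fun i => X i j) = X *ᵥ Pi.single j 1 from (mulVec_single_one X j).symm,
      ← mulVec_sub]
    exact (sqrt_re_star_mulVec_dotProduct_mulVec hX _).trans_le hw
end

section
/- Choose S > 1 so that G = 2/(S + S^{-1}) (the 'natural' choice of parameter for a gap 0 < G < 1). Then for every real x with |x| ≥ 1/G one has 0 < r_m^{(T)}(x) ≤ 1/(α + β T_{2m}(G^{-2})), with equality at x = ±1/G, while for every real x with |x| ≤ G one has r_m^{(T)}(x) ≥ 1/(α + β). Consequently the worst-case convergence factor satisfies max_{|x| ≥ 1/G} r_m^{(T)}(x) / min_{|x| ≤ G} r_m^{(T)}(x) = (α + β)/(α + β T_{2m}(G^{-2})). -/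
/-! Write `u_j = e^{iθ_j}`; these are the `2m`-th roots of `-1`. Choosing `t` with
`t + t⁻¹ = (S + S⁻¹) x`, the denominators factor as
`(S + S⁻¹)(z_j - x) = S u_j⁻¹ (u_j - a)(u_j - b)` with `a = t/S`, `b = 1/(tS)`, and each term
of `r_m^{(T)}(x)` splits into partial fractions `(1 + a/(u_j - a) + b/(u_j - b)) / 2m`. Summing
over the roots of `X^{2m} + 1` gives `r_m^{(T)}(x) = 1 - A/(A+1) - B/(B+1)` with `A = a^{2m}`,
`B = b^{2m}`. Since `AB = S^{-4m}` and `A + B = S^{-2m} (t^{2m} + t^{-2m}) = 2 S^{-2m} T_{2m}(x/G)`,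
this is `1/(α + β T_{2m}(x/G))`. The bounds then come from `T_{2m} = 2T_m² - 1 ≥ -1`,
`|T_{2m}| ≤ 1` on `[-1, 1]`, and the growth of `T_{2m}(y)` with `|y|` for `|y| ≥ 1`. -/

open Polynomial Polynomial.Chebyshev Finset

namespace Polynomial.Chebyshev

theorem eval_T_two_mul {R : Type*} [CommRing R] (n : ℤ) (x : R) :
    (T R (2 * n)).eval x = 2 * (T R n).eval x ^ 2 - 1 := by
  simp [T_mul, T_two]

theorem eval_T_two_mul_neg {R : Type*} [CommRing R] (n : ℤ) (x : R) :
    (T R (2 * n)).eval (-x) = (T R (2 * n)).eval x := by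
  simp [T_eval_neg, Int.negOnePow_two_mul]

theorem neg_one_le_eval_T_real_two_mul (n : ℤ) (x : ℝ) : -1 ≤ (T ℝ (2 * n)).eval x := by
  rw [eval_T_two_mul]
  nlinarith [sq_nonneg ((T ℝ n).eval x)]

theorem eval_T_real_le_eval_T_real (n : ℤ) {x y : ℝ} (hx : 1 ≤ x) (hxy : x ≤ y) :
    (T ℝ n).eval x ≤ (T ℝ n).eval y := by
  rw [← Real.cosh_arcosh hx, ← Real.cosh_arcosh (hx.trans hxy), T_real_cosh, T_real_cosh,
    Real.cosh_le_cosh, abs_mul, abs_mul]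
  gcongr
  · exact Real.arcosh_nonneg hx
  · exact (Real.arcosh_le_arcosh (by linarith) (by linarith)).2 hxy

theorem eval_T_real_two_mul_le_of_le_abs (n : ℤ) {x y : ℝ} (hx : 1 ≤ x) (hxy : x ≤ |y|) :
    (T ℝ (2 * n)).eval x ≤ (T ℝ (2 * n)).eval y := by
  rcases abs_choice y with hy | hy
  · exact hy ▸ eval_T_real_le_eval_T_real _ hx hxy
  · rw [← neg_neg y, eval_T_two_mul_neg, ← hy]
    exact eval_T_real_le_eval_T_real _ hx hxy

theorem two_mul_eval_T_of_add_inv {K : Type*} [Field K] [Invertible (2 : K)] (n : ℕ) {t y : K}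
    (ht : t ≠ 0) (hy : t + t⁻¹ = 2 * y) : 2 * (T K n).eval y = t ^ n + t⁻¹ ^ n := by
  rw [chebyshev_T_eq_dickson_one_one, eval_mul, eval_C, eval_comp, eval_mul, eval_X,
    eval_ofNat, ← hy, dickson_one_one_eval_add_inv _ _ (mul_inv_cancel₀ ht), ← mul_assoc,
    mul_invOf_self, one_mul]

section

variable {α β : ℝ} (n : ℤ)

theorem add_mul_eval_T_two_mul_pos (hβ : 0 ≤ β) (hβα : β < α) (y : ℝ) :
    0 < α + β * (T ℝ (2 * n)).eval y := by
  nlinarith [neg_one_le_eval_T_real_two_mul n y]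

theorem one_div_add_mul_eval_T_two_mul_le (hβ : 0 ≤ β) (hβα : β < α) {y z : ℝ} (hy : 1 ≤ y)
    (hyz : y ≤ |z|) :
    1 / (α + β * (T ℝ (2 * n)).eval z) ≤ 1 / (α + β * (T ℝ (2 * n)).eval y) :=
  one_div_le_one_div_of_le (add_mul_eval_T_two_mul_pos n hβ hβα y)
    (by gcongr; exact eval_T_real_two_mul_le_of_le_abs n hy hyz)

theorem one_div_add_le_one_div_add_mul_eval_T (hβ : 0 ≤ β) (hβα : β < α) {z : ℝ}
    (hz : |z| ≤ 1) : 1 / (α + β) ≤ 1 / (α + β * (T ℝ n).eval z) := by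
  have hT := abs_le.1 (abs_eval_T_real_le_one n hz)
  exact one_div_le_one_div_of_le (by nlinarith) (by nlinarith)

end

end Polynomial.Chebyshev

theorem Complex.exists_add_inv_eq_two_mul (y : ℂ) : ∃ t : ℂ, t ≠ 0 ∧ t + t⁻¹ = 2 * y := by
  obtain ⟨s, hs⟩ := IsAlgClosed.exists_eq_mul_self (discrim 1 (-2 * y) 1)
  obtain ⟨t, ht⟩ := exists_quadratic_eq_zero one_ne_zero ⟨s, hs⟩
  have ht0 : t ≠ 0 := by rintro rfl; simp at ht
  exact ⟨t, ht0, by field_simp; linear_combination ht⟩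

theorem two_lt_add_inv {S : ℝ} (hS : 1 < S) : 2 < S + S⁻¹ := by
  have := inv_lt_one_of_one_lt₀ hS
  nlinarith [mul_inv_cancel₀ (zero_lt_one.trans hS).ne']

theorem inv_pow_lt_pow {S : ℝ} (hS : 1 < S) {n : ℕ} (hn : n ≠ 0) : S⁻¹ ^ n < S ^ n :=
  pow_lt_pow_left₀ ((inv_lt_one_of_one_lt₀ hS).trans hS) (by positivity) hn

theorem two_div_pow_sub_inv_pow_mem_Ioo {S : ℝ} (hS : 1 < S) {n : ℕ} (hn : n ≠ 0) :
    2 / (S ^ n - S⁻¹ ^ n) ∈ Set.Ioo 0 ((S ^ n + S⁻¹ ^ n) / (S ^ n - S⁻¹ ^ n)) := by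
  have hd := sub_pos.2 (inv_pow_lt_pow hS hn)
  refine ⟨div_pos two_pos hd, div_lt_div_of_pos_right ?_ hd⟩
  simpa only [inv_pow] using two_lt_add_inv (one_lt_pow₀ hS hn)

theorem sum_div_sub_eq_of_pow_eq_neg_one {K : Type*} [Field K] {n : ℕ} (hn : 0 < n)
    (u : Fin n → K) (hu : ∀ j, u j ^ n = -1)
    (hsum : ∀ k, 0 < k → k < n → ∑ j, u j ^ k = 0) {c : K} (hc : c ^ n + 1 ≠ 0) :
    ∑ j, c / (u j - c) = -n * c ^ n / (c ^ n + 1) := by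
  have term (j : Fin n) :
      c / (u j - c) * (c ^ n + 1) = -c * ∑ i ∈ range n, u j ^ i * c ^ (n - 1 - i) := by
    have hne : u j - c ≠ 0 := fun h ↦ hc (by rw [← sub_eq_zero.1 h, hu]; ring)
    rw [div_mul_eq_mul_div, div_eq_iff hne]
    linear_combination c * geom_sum₂_mul (u j) c n + c * hu j
  have power : ∑ j, ∑ i ∈ range n, u j ^ i * c ^ (n - 1 - i) = n * c ^ (n - 1) := by
    obtain ⟨n, rfl⟩ := Nat.exists_eq_add_of_lt hn
    rw [Finset.sum_comm, Finset.sum_range_succ']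
    simp only [← Finset.sum_mul]
    rw [Finset.sum_eq_zero fun i hi ↦ by rw [hsum _ i.succ_pos (by simpa using hi), zero_mul]]
    simp
  rw [eq_div_iff hc, Finset.sum_mul, Finset.sum_congr rfl fun j _ ↦ term j, ← Finset.mul_sum,
    power]
  linear_combination (-(n : K)) * mul_pow_sub_one hn.ne' c

noncomputable def rootOfNegOne (n j : ℕ) : ℂ :=
  Complex.exp (Complex.I * ((Real.pi * (2 * (j : ℝ) + 1) / n : ℝ) : ℂ))

theorem rootOfNegOne_pow (n j k : ℕ) :
    rootOfNegOne n j ^ k =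
      Complex.exp (Real.pi * Complex.I / n) ^ k *
        (Complex.exp (2 * Real.pi * Complex.I / n) ^ k) ^ j := by
  simp only [rootOfNegOne, ← Complex.exp_nat_mul, ← Complex.exp_add]
  congr 1
  push_cast
  ring

theorem rootOfNegOne_pow_self {n : ℕ} (hn : 0 < n) (j : ℕ) : rootOfNegOne n j ^ n = -1 := by
  rw [rootOfNegOne_pow, (Complex.isPrimitiveRoot_exp n hn.ne').pow_eq_one, one_pow, mul_one,
    ← Complex.exp_nat_mul, mul_div_cancel₀ _ (by exact_mod_cast hn.ne'), Complex.exp_pi_mul_I]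

theorem sum_rootOfNegOne_pow {n k : ℕ} (hk : 0 < k) (hkn : k < n) :
    ∑ j : Fin n, rootOfNegOne n j ^ k = 0 := by
  have hζ := Complex.isPrimitiveRoot_exp n (by omega)
  simp only [rootOfNegOne_pow, ← Finset.mul_sum]
  rw [Fin.sum_univ_eq_sum_range (fun j ↦ (Complex.exp (2 * Real.pi * Complex.I / n) ^ k) ^ j),
    geom_sum_eq (hζ.pow_ne_one_of_pos_of_lt hk.ne' hkn), pow_right_comm, hζ.pow_eq_one]
  simp

theorem trapezoid_term_eq_partial_fractions {K : Type*} [Field K] {s a b u x : K} (hs : s ≠ 0)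
    (hK : s + s⁻¹ ≠ 0) (hu : u ≠ 0) (hab : s ^ 2 * (a * b) = 1)
    (hx : (s + s⁻¹) * x = s * (a + b)) (ha : u - a ≠ 0) (hb : u - b ≠ 0) :
    (s * u - s⁻¹ * u⁻¹) / (s + s⁻¹) / ((s * u + s⁻¹ * u⁻¹) / (s + s⁻¹) - x) =
      1 + a / (u - a) + b / (u - b) := by
  have hden : (s * u + s⁻¹ * u⁻¹) / (s + s⁻¹) - x =
      s * u⁻¹ * (u - a) * (u - b) / (s + s⁻¹) := by
    rw [eq_div_iff hK, sub_mul, div_mul_cancel₀ _ hK, mul_comm x, hx]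
    field_simp
    linear_combination -hab
  rw [hden, div_div_div_cancel_right₀ hK]
  field_simp
  linear_combination hab

/-- Indices start at `0`: `trapezoidAngle m j` is the paper's `θ_{j+1}`. -/
noncomputable def trapezoidAngle (m j : ℕ) : ℝ := Real.pi * (2 * (j : ℝ) + 1) / (2 * m)

noncomputable def trapezoidNode (S θ : ℝ) : ℂ :=
  ((S : ℂ) * Complex.exp (Complex.I * (θ : ℂ)) + (S : ℂ)⁻¹ * Complex.exp (-(Complex.I * (θ : ℂ)))) /
    ((S : ℂ) + (S : ℂ)⁻¹)

noncomputable def trapezoidWeight (m : ℕ) (S θ : ℝ) : ℂ :=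
  (1 / (2 * (m : ℂ))) *
    ((S : ℂ) * Complex.exp (Complex.I * (θ : ℂ)) -
      (S : ℂ)⁻¹ * Complex.exp (-(Complex.I * (θ : ℂ)))) / ((S : ℂ) + (S : ℂ)⁻¹)

noncomputable def trapezoidRational (m : ℕ) (S x : ℝ) : ℂ :=
  ∑ j : Fin (2 * m),
    trapezoidWeight m S (trapezoidAngle m j) / (trapezoidNode S (trapezoidAngle m j) - x)

theorem trapezoidRational_eq_of_add_inv {m : ℕ} (hm : 0 < m) {S : ℝ} (hS : 0 < S) {x : ℝ}
    {t : ℂ} (ht0 : t ≠ 0) (ht : t + t⁻¹ = ((S : ℂ) + (S : ℂ)⁻¹) * x)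
    (ha : ((S : ℂ)⁻¹ * t) ^ (2 * m) + 1 ≠ 0) (hb : ((S : ℂ)⁻¹ * t⁻¹) ^ (2 * m) + 1 ≠ 0) :
    trapezoidRational m S x = 1 - ((S : ℂ)⁻¹ * t) ^ (2 * m) / (((S : ℂ)⁻¹ * t) ^ (2 * m) + 1) -
      ((S : ℂ)⁻¹ * t⁻¹) ^ (2 * m) / (((S : ℂ)⁻¹ * t⁻¹) ^ (2 * m) + 1) := by
  have hn : 0 < 2 * m := by omega
  have hS0 : (S : ℂ) ≠ 0 := by exact_mod_cast hS.ne'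
  have hK : (S : ℂ) + (S : ℂ)⁻¹ ≠ 0 := by exact_mod_cast (by positivity : S + S⁻¹ ≠ 0)
  have hu (j : Fin (2 * m)) : rootOfNegOne (2 * m) j ^ (2 * m) = -1 := rootOfNegOne_pow_self hn j
  have hsub (c : ℂ) (hc : c ^ (2 * m) + 1 ≠ 0) (j : Fin (2 * m)) :
      rootOfNegOne (2 * m) j - c ≠ 0 :=
    fun h ↦ hc (by rw [← sub_eq_zero.1 h, hu]; ring)
  have hterm (j : Fin (2 * m)) :
      trapezoidWeight m S (trapezoidAngle m j) / (trapezoidNode S (trapezoidAngle m j) - x) =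
        1 / (2 * m) * (1 + (S : ℂ)⁻¹ * t / (rootOfNegOne (2 * m) j - (S : ℂ)⁻¹ * t) +
          (S : ℂ)⁻¹ * t⁻¹ / (rootOfNegOne (2 * m) j - (S : ℂ)⁻¹ * t⁻¹)) := by
    have hroot : Complex.exp (Complex.I * trapezoidAngle m j) = rootOfNegOne (2 * m) j := by
      simp [trapezoidAngle, rootOfNegOne]
    rw [trapezoidWeight, trapezoidNode, Complex.exp_neg, hroot, mul_div_assoc, mul_div_assoc,
      trapezoid_term_eq_partial_fractions (u := rootOfNegOne (2 * m) j) hS0 hK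
        (Complex.exp_ne_zero _) (by field_simp) (by rw [← ht]; field_simp) (hsub _ ha j)
        (hsub _ hb j)]
  simp only [trapezoidRational, hterm, ← Finset.mul_sum, Finset.sum_add_distrib,
    sum_div_sub_eq_of_pow_eq_neg_one hn _ hu (fun k hk hkn ↦ sum_rootOfNegOne_pow hk hkn) ha,
    sum_div_sub_eq_of_pow_eq_neg_one hn _ hu (fun k hk hkn ↦ sum_rootOfNegOne_pow hk hkn) hb,
    Finset.sum_const, Finset.card_univ, Fintype.card_fin, nsmul_eq_mul]
  generalize ((S : ℂ)⁻¹ * t) ^ (2 * m) = A at ha ⊢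
  generalize ((S : ℂ)⁻¹ * t⁻¹) ^ (2 * m) = B at hb ⊢
  have hm0 : (m : ℂ) ≠ 0 := by exact_mod_cast hm.ne'
  field_simp
  push_cast
  ring

theorem trapezoidRational_eq {m : ℕ} (hm : 0 < m) {S : ℝ} (hS : 1 < S) (x : ℝ) :
    trapezoidRational m S x = (((S ^ (2 * m) - S⁻¹ ^ (2 * m)) /
      (S ^ (2 * m) + S⁻¹ ^ (2 * m) + 2 * (T ℝ (2 * m)).eval ((S + S⁻¹) / 2 * x)) : ℝ) : ℂ) := by
  have hS0 : 0 < S := zero_lt_one.trans hS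
  obtain ⟨t, ht0, ht⟩ := Complex.exists_add_inv_eq_two_mul ((S + S⁻¹) / 2 * x : ℝ)
  have hAB : ((S : ℂ)⁻¹ * t) ^ (2 * m) * ((S : ℂ)⁻¹ * t⁻¹) ^ (2 * m) =
      ((S⁻¹ ^ (2 * m)) ^ 2 : ℝ) := by
    rw [← mul_pow]; push_cast; field_simp; ring
  have hApB : ((S : ℂ)⁻¹ * t) ^ (2 * m) + ((S : ℂ)⁻¹ * t⁻¹) ^ (2 * m) =
      (2 * S⁻¹ ^ (2 * m) * (T ℝ (2 * m)).eval ((S + S⁻¹) / 2 * x) : ℝ) := by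
    have := two_mul_eval_T_of_add_inv (2 * m) ht0 ht
    push_cast [complex_ofReal_eval_T] at this ⊢
    rw [mul_pow, mul_pow, ← mul_add, ← this]
    ring
  have hτ := neg_one_le_eval_T_real_two_mul m ((S + S⁻¹) / 2 * x)
  generalize (T ℝ (2 * m)).eval ((S + S⁻¹) / 2 * x) = τ at hτ hApB ⊢
  have hPQ : S ^ (2 * m) * S⁻¹ ^ (2 * m) = 1 := by
    rw [← mul_pow, mul_inv_cancel₀ hS0.ne', one_pow]
  have hQ1 : S⁻¹ ^ (2 * m) < 1 := pow_lt_one₀ (by positivity) (inv_lt_one_of_one_lt₀ hS) (by omega)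
  have hQ0 : 0 < S⁻¹ ^ (2 * m) := by positivity
  generalize S ^ (2 * m) = P at hPQ ⊢
  generalize S⁻¹ ^ (2 * m) = Q at hPQ hQ0 hQ1 hAB hApB ⊢
  -- `τ ≥ -1` keeps the poles off the real line: `(A + 1)(B + 1) = 1 + 2Qτ + Q² ≥ (1 - Q)² > 0`.
  have hden : 0 < 1 + 2 * Q * τ + Q ^ 2 := by
    nlinarith [mul_le_mul_of_nonneg_left hτ hQ0.le, pow_pos (sub_pos.2 hQ1) 2]
  have hprod : (((S : ℂ)⁻¹ * t) ^ (2 * m) + 1) * (((S : ℂ)⁻¹ * t⁻¹) ^ (2 * m) + 1) =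
      ((1 + 2 * Q * τ + Q ^ 2 : ℝ) : ℂ) := by
    push_cast at hAB hApB ⊢
    linear_combination hAB + hApB
  have hprod0 := hprod ▸ Complex.ofReal_ne_zero.2 hden.ne'
  rw [trapezoidRational_eq_of_add_inv hm hS0 ht0 (by rw [ht]; push_cast; ring)
    (left_ne_zero_of_mul hprod0) (right_ne_zero_of_mul hprod0)]
  generalize ((S : ℂ)⁻¹ * t) ^ (2 * m) = A at hAB hApB hprod hprod0 ⊢
  generalize ((S : ℂ)⁻¹ * t⁻¹) ^ (2 * m) = B at hAB hApB hprod hprod0 ⊢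
  have hP : 0 < P + Q + 2 * τ := by
    have hP0 : 0 < P := pos_of_mul_pos_left (hPQ ▸ one_pos) hQ0.le
    nlinarith [mul_pos hP0 hden]
  calc 1 - A / (A + 1) - B / (B + 1) = (1 - A * B) / ((A + 1) * (B + 1)) := by
        field_simp [left_ne_zero_of_mul hprod0, right_ne_zero_of_mul hprod0]
        ring
    _ = ((1 - Q ^ 2) / (1 + 2 * Q * τ + Q ^ 2) : ℝ) := by rw [hAB, hprod]; push_cast; ring
    _ = ((P - Q) / (P + Q + 2 * τ) : ℝ) := by
        rw [Complex.ofReal_inj, div_eq_div_iff hden.ne' hP.ne']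
        linear_combination (-2 * (Q + τ)) * hPQ

theorem trapezoidRational_eq_one_div {m : ℕ} (hm : 0 < m) {S : ℝ} (hS : 1 < S) {α β G : ℝ}
    (hα : α = (S ^ (2 * m) + S⁻¹ ^ (2 * m)) / (S ^ (2 * m) - S⁻¹ ^ (2 * m)))
    (hβ : β = 2 / (S ^ (2 * m) - S⁻¹ ^ (2 * m))) (hG : G = 2 / (S + S⁻¹)) (x : ℝ) :
    trapezoidRational m S x = ((1 / (α + β * (T ℝ (2 * m)).eval (x / G)) : ℝ) : ℂ) := by
  have hPQ := inv_pow_lt_pow hS (n := 2 * m) (by omega)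
  have hx : x / G = (S + S⁻¹) / 2 * x := by
    rw [hG, div_div_eq_mul_div]; ring
  rw [trapezoidRational_eq hm hS, hx, hα, hβ]
  congr 1
  field_simp [(sub_pos.2 hPQ).ne']

/-- **Worst-case convergence factor of the trapezoid rule with the natural parameter
choice** (Güttel–Polizzi–Tang–Viaud, Section 5).  With `G = 2/(S+S⁻¹)`, one has
`0 < r_m^{(T)}(x) ≤ 1/(α + β T_{2m}(G^{-2}))` for `|x| ≥ 1/G` with equality at
`x = ±1/G`, and `r_m^{(T)}(x) ≥ 1/(α+β)` for `|x| ≤ G`; consequently the worst-case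
convergence factor equals `(α+β)/(α + β T_{2m}(G^{-2}))`. -/
theorem trapezoid_rule_worst_case_factor
    (m : ℕ) (hm : 0 < m) (S : ℝ) (hS : 1 < S)
    (θ : Fin (2 * m) → ℝ)
    (hθ : ∀ j, θ j = Real.pi * (2 * (j : ℝ) + 1) / (2 * m))
    (zn w : Fin (2 * m) → ℂ)
    (hzn : ∀ j, zn j =
      ((S : ℂ) * Complex.exp (Complex.I * (θ j : ℂ)) +
        (S : ℂ)⁻¹ * Complex.exp (-(Complex.I * (θ j : ℂ)))) / ((S : ℂ) + (S : ℂ)⁻¹))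
    (hw : ∀ j, w j =
      (1 / (2 * (m : ℂ))) *
        ((S : ℂ) * Complex.exp (Complex.I * (θ j : ℂ)) -
          (S : ℂ)⁻¹ * Complex.exp (-(Complex.I * (θ j : ℂ)))) / ((S : ℂ) + (S : ℂ)⁻¹))
    (α β : ℝ)
    (hα : α = (S ^ (2 * m) + S⁻¹ ^ (2 * m)) / (S ^ (2 * m) - S⁻¹ ^ (2 * m)))
    (hβ : β = 2 / (S ^ (2 * m) - S⁻¹ ^ (2 * m)))
    (rT : ℝ → ℂ)
    (hrT : ∀ x, rT x = ∑ j, w j / (zn j - (x : ℂ)))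
    (G : ℝ) (hG : G = 2 / (S + S⁻¹)) :
    (∀ x : ℝ, 1 / G ≤ |x| →
        (rT x).im = 0 ∧ 0 < (rT x).re ∧
          (rT x).re ≤ 1 / (α + β * (Polynomial.Chebyshev.T ℝ (2 * m)).eval (G⁻¹ ^ 2))) ∧
      (rT (1 / G)).re = 1 / (α + β * (Polynomial.Chebyshev.T ℝ (2 * m)).eval (G⁻¹ ^ 2)) ∧
      (rT (-(1 / G))).re = 1 / (α + β * (Polynomial.Chebyshev.T ℝ (2 * m)).eval (G⁻¹ ^ 2)) ∧
      (∀ x : ℝ, |x| ≤ G → 1 / (α + β) ≤ (rT x).re) ∧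
      sSup ((fun x : ℝ => (rT x).re) '' {x : ℝ | 1 / G ≤ |x|}) /
          sInf ((fun x : ℝ => (rT x).re) '' {x : ℝ | |x| ≤ G})
        = (α + β) / (α + β * (Polynomial.Chebyshev.T ℝ (2 * m)).eval (G⁻¹ ^ 2)) := by
  obtain ⟨hβ0, hβα⟩ := hα ▸ hβ ▸ two_div_pow_sub_inv_pow_mem_Ioo hS (n := 2 * m) (by omega)
  have hGinv : 1 < G⁻¹ := by rw [hG, inv_div]; linarith [two_lt_add_inv hS]
  have hG0 : 0 < G := inv_pos.1 (one_pos.trans hGinv)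
  have hr (x : ℝ) : rT x = ((1 / (α + β * (T ℝ (2 * m)).eval (x / G)) : ℝ) : ℂ) := by
    simp only [hrT, hzn, hw, hθ]
    exact trapezoidRational_eq_one_div hm hS hα hβ hG x
  have hre (x : ℝ) : (rT x).re = 1 / (α + β * (T ℝ (2 * m)).eval (x / G)) := by
    rw [hr, Complex.ofReal_re]
  have hpeak : 1 / G / G = G⁻¹ ^ 2 := by field_simp
  have houter (x : ℝ) (hx : 1 / G ≤ |x|) :
      (rT x).re ≤ 1 / (α + β * (T ℝ (2 * m)).eval (G⁻¹ ^ 2)) := by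
    rw [hre, ← hpeak]
    refine one_div_add_mul_eval_T_two_mul_le m hβ0.le hβα (hpeak ▸ one_le_pow₀ hGinv.le) ?_
    rw [abs_div, abs_of_pos hG0]
    gcongr
  have hinner (x : ℝ) (hx : |x| ≤ G) : 1 / (α + β) ≤ (rT x).re := by
    rw [hre]
    refine one_div_add_le_one_div_add_mul_eval_T _ hβ0.le hβα ?_
    rwa [abs_div, abs_of_pos hG0, div_le_one hG0]
  have hright : (rT (1 / G)).re = 1 / (α + β * (T ℝ (2 * m)).eval (G⁻¹ ^ 2)) := by
    rw [hre, hpeak]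
  have hsup : sSup ((fun x : ℝ => (rT x).re) '' {x : ℝ | 1 / G ≤ |x|}) =
      1 / (α + β * (T ℝ (2 * m)).eval (G⁻¹ ^ 2)) :=
    IsGreatest.csSup_eq
      ⟨⟨1 / G, le_abs_self (1 / G), hright⟩, by rintro _ ⟨x, hx, rfl⟩; exact houter x hx⟩
  have hinf : sInf ((fun x : ℝ => (rT x).re) '' {x : ℝ | |x| ≤ G}) = 1 / (α + β) := by
    refine IsLeast.csInf_eq
      ⟨⟨G, (abs_of_pos hG0).le, ?_⟩, by rintro _ ⟨x, hx, rfl⟩; exact hinner x hx⟩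
    exact (hre G).trans (by rw [div_self hG0.ne', T_eval_one, mul_one])
  refine ⟨fun x hx ↦ ⟨by rw [hr, Complex.ofReal_im],
      hre x ▸ one_div_pos.2 (add_mul_eval_T_two_mul_pos _ hβ0.le hβα _), houter x hx⟩,
    hright, by rw [hre, neg_div, eval_T_two_mul_neg, hpeak], hinner, ?_⟩
  rw [hsup, hinf, div_div_eq_mul_div, div_one, one_div_mul_eq_div]
end
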